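/- Under the same GRU setup, the spectral norm of the Jacobian ∂f/∂x at any point of T is at most (1/2)‖W_z‖₂ + z_max (‖W_h‖₂ + (1/4)‖U_h‖₂‖W_r‖₂). -/

import Mathlib

open Matrix

/-- The logistic sigmoid. -/
noncomputable def sigmoid (u : ℝ) : ℝ := 1 / (1 + Real.exp (-u))

/-- Spectral norm of a (possibly rectangular) matrix, viewed as an operator
between Euclidean spaces. -/
noncomputable def specNorm {m d : ℕ} (A : Matrix (Fin m) (Fin d) ℝ) : ℝ :=
  ‖LinearMap.toContinuousLinearMap (Matrix.toEuclideanLin A)‖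

/-- GRU update gate. -/
noncomputable def gruZ {m d : ℕ} (Wz : Matrix (Fin m) (Fin d) ℝ)
    (Uz : Matrix (Fin m) (Fin m) ℝ) (bz : Fin m → ℝ)
    (h : Fin m → ℝ) (x : Fin d → ℝ) : Fin m → ℝ :=
  fun i => sigmoid ((Wz.mulVec x + Uz.mulVec h + bz) i)

/-- GRU reset gate. -/
noncomputable def gruR {m d : ℕ} (Wr : Matrix (Fin m) (Fin d) ℝ)
    (Ur : Matrix (Fin m) (Fin m) ℝ) (br : Fin m → ℝ)
    (h : Fin m → ℝ) (x : Fin d → ℝ) : Fin m → ℝ :=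
  fun i => sigmoid ((Wr.mulVec x + Ur.mulVec h + br) i)

/-- GRU candidate state. -/
noncomputable def gruHTilde {m d : ℕ} (Wr Wh : Matrix (Fin m) (Fin d) ℝ)
    (Ur Uh : Matrix (Fin m) (Fin m) ℝ) (br bh : Fin m → ℝ)
    (h : Fin m → ℝ) (x : Fin d → ℝ) : Fin m → ℝ :=
  fun i => Real.tanh
    ((Wh.mulVec x + Uh.mulVec (fun j => gruR Wr Ur br h x j * h j) + bh) i)

/-- GRU update map `f(h,x) = (1−z)⊙h + z⊙h̃`. -/
noncomputable def gruF {m d : ℕ} (Wz Wr Wh : Matrix (Fin m) (Fin d) ℝ)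
    (Uz Ur Uh : Matrix (Fin m) (Fin m) ℝ) (bz br bh : Fin m → ℝ)
    (p : EuclideanSpace ℝ (Fin m) × EuclideanSpace ℝ (Fin d)) :
    EuclideanSpace ℝ (Fin m) :=
  let h : Fin m → ℝ := p.1
  let x : Fin d → ℝ := p.2
  let z := gruZ Wz Uz bz h x
  let ht := gruHTilde Wr Wh Ur Uh br bh h x
  WithLp.toLp 2 (fun i => (1 - z i) * h i + z i * ht i : Fin m → ℝ)


-- ===== auxiliary lemmas =====

noncomputable def sigmoid' (u : ℝ) : ℝ := sigmoid u * (1 - sigmoid u)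

lemma sigmoid_hasDerivAt (u : ℝ) : HasDerivAt sigmoid (sigmoid' u) u := by
  have hne : (1 : ℝ) + Real.exp (-u) ≠ 0 := by positivity
  have h1 : HasDerivAt (fun u : ℝ => 1 + Real.exp (-u)) (-Real.exp (-u)) u := by
    simpa using (((Real.hasDerivAt_exp (-u)).comp u ((hasDerivAt_id u).neg)).const_add 1)
  have h2 : HasDerivAt sigmoid (Real.exp (-u) / (1 + Real.exp (-u)) ^ 2) u := by
    have e : sigmoid = fun y : ℝ => (1 + Real.exp (-y))⁻¹ := by
      funext y; simp [sigmoid, one_div]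
    rw [e]; simpa [Pi.inv_def] using h1.inv hne
  convert h2 using 1
  unfold sigmoid' sigmoid
  field_simp
  ring

lemma sigmoid_pos (u : ℝ) : 0 < sigmoid u := by unfold sigmoid; positivity

lemma sigmoid_lt_one (u : ℝ) : sigmoid u < 1 := by
  unfold sigmoid
  rw [div_lt_one (by positivity)]
  simpa using Real.exp_pos (-u)

lemma sigmoid_deriv_bound (u : ℝ) : sigmoid' u ≤ 1/4 := by
  unfold sigmoid'
  nlinarith [sigmoid_pos u, sigmoid_lt_one u, sq_nonneg (sigmoid u - 1/2)]

lemma sigmoid_deriv_nonneg (u : ℝ) : 0 ≤ sigmoid' u := by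
  unfold sigmoid'
  nlinarith [sigmoid_pos u, sigmoid_lt_one u]

lemma tanh_hasDerivAt (u : ℝ) :
    HasDerivAt Real.tanh (1 - Real.tanh u ^ 2) u := by
  have hc : 0 < Real.cosh u := Real.cosh_pos u
  have h : HasDerivAt (fun x => Real.sinh x / Real.cosh x)
      ((Real.cosh u * Real.cosh u - Real.sinh u * Real.sinh u) / Real.cosh u ^ 2) u :=
    (Real.hasDerivAt_sinh u).div (Real.hasDerivAt_cosh u) hc.ne'
  have heq : ∀ x, Real.tanh x = Real.sinh x / Real.cosh x := fun x =>
    Real.tanh_eq_sinh_div_cosh x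
  rw [funext heq]
  convert h using 1
  simp only [heq]
  have h2 : Real.cosh u ^ 2 = Real.sinh u ^ 2 + 1 := by
    have := Real.cosh_sq u; linarith
  field_simp

lemma abs_tanh_le_one (u : ℝ) : |Real.tanh u| ≤ 1 := by
  have hc := Real.cosh_pos u
  rw [Real.tanh_eq_sinh_div_cosh, abs_div, abs_of_pos hc, div_le_one hc]
  rw [abs_le]
  constructor <;>
  · rw [Real.sinh_eq, Real.cosh_eq]
    have := Real.exp_pos u
    have := Real.exp_pos (-u)
    linarith

lemma sigmoid_differentiable : Differentiable ℝ sigmoid :=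
  fun u => (sigmoid_hasDerivAt u).differentiableAt

lemma tanh_differentiable : Differentiable ℝ Real.tanh :=
  fun u => (tanh_hasDerivAt u).differentiableAt

noncomputable def matCLM {m d : ℕ} (A : Matrix (Fin m) (Fin d) ℝ) :
    EuclideanSpace ℝ (Fin d) →L[ℝ] EuclideanSpace ℝ (Fin m) :=
  LinearMap.toContinuousLinearMap (Matrix.toEuclideanLin A)

lemma specNorm_eq {m d : ℕ} (A : Matrix (Fin m) (Fin d) ℝ) :
    ‖matCLM A‖ = specNorm A := rfl

lemma matCLM_apply {m d : ℕ} (A : Matrix (Fin m) (Fin d) ℝ)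
    (v : EuclideanSpace ℝ (Fin d)) (i : Fin m) :
    matCLM A v i = A.mulVec (v : Fin d → ℝ) i := by
  simp [matCLM, Matrix.toEuclideanLin_apply]

noncomputable def diagCLM {n : ℕ} (q : Fin n → ℝ) :
    EuclideanSpace ℝ (Fin n) →L[ℝ] EuclideanSpace ℝ (Fin n) :=
  matCLM (Matrix.diagonal q)

lemma diagCLM_apply {n : ℕ} (q : Fin n → ℝ) (v : EuclideanSpace ℝ (Fin n)) (i : Fin n) :
    diagCLM q v i = q i * v i := by
  rw [diagCLM, matCLM_apply, Matrix.mulVec_diagonal]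

lemma diagCLM_norm_le {n : ℕ} (q : Fin n → ℝ) (C : ℝ) (hC : 0 ≤ C)
    (h : ∀ i, |q i| ≤ C) : ‖diagCLM q‖ ≤ C := by
  refine ContinuousLinearMap.opNorm_le_bound _ hC (fun v => ?_)
  rw [EuclideanSpace.norm_eq, EuclideanSpace.norm_eq]
  have h1 : ∀ i, ‖diagCLM q v i‖ ^ 2 ≤ C ^ 2 * ‖v i‖ ^ 2 := by
    intro i
    rw [diagCLM_apply]
    have h2 : |q i * v i| ≤ C * |v i| := by
      rw [abs_mul]
      exact mul_le_mul_of_nonneg_right (h i) (abs_nonneg _)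
    calc ‖q i * v i‖ ^ 2 = |q i * v i| ^ 2 := by rw [Real.norm_eq_abs]
      _ ≤ (C * |v i|) ^ 2 := by
          apply sq_le_sq' <;> nlinarith [abs_nonneg (q i * v i)]
      _ = C ^ 2 * ‖v i‖ ^ 2 := by rw [Real.norm_eq_abs]; ring
  calc Real.sqrt (∑ i, ‖diagCLM q v i‖ ^ 2) ≤ Real.sqrt (∑ i, C ^ 2 * ‖v i‖ ^ 2) := by
        apply Real.sqrt_le_sqrt
        exact Finset.sum_le_sum fun i _ => h1 i
    _ = C * Real.sqrt (∑ i, ‖v i‖ ^ 2) := by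
        rw [← Finset.mul_sum, Real.sqrt_mul (by positivity), Real.sqrt_sq hC]

lemma hasFDerivAt_row {m d : ℕ} (A : Matrix (Fin m) (Fin d) ℝ) (c : Fin m → ℝ) (i : Fin m)
    (x : EuclideanSpace ℝ (Fin d)) :
    HasFDerivAt (fun y : EuclideanSpace ℝ (Fin d) => (A.mulVec y + c) i)
      ((EuclideanSpace.proj (𝕜 := ℝ) i).comp (matCLM A)) x := by
  have h1 := (((EuclideanSpace.proj (𝕜 := ℝ) i).comp (matCLM A)).hasFDerivAt (x := x)).add_const
    (c i)
  have he : (fun y : EuclideanSpace ℝ (Fin d) => (A.mulVec y + c) i) =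
      fun y => ((EuclideanSpace.proj (𝕜 := ℝ) i).comp (matCLM A)) y + c i := by
    funext y; simp [matCLM_apply]
  rw [he]; exact h1

section main
variable {m d : ℕ} (Wz Wr Wh : Matrix (Fin m) (Fin d) ℝ)
  (Uz Ur Uh : Matrix (Fin m) (Fin m) ℝ) (bz br bh : Fin m → ℝ)
  (h₀ : EuclideanSpace ℝ (Fin m)) (x : EuclideanSpace ℝ (Fin d))

lemma coord_hasFDerivAt (i : Fin m) :
    HasFDerivAt (fun y : EuclideanSpace ℝ (Fin d) =>
      (1 - sigmoid ((Wz.mulVec y + Uz.mulVec h₀ + bz) i)) * h₀ i +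
        sigmoid ((Wz.mulVec y + Uz.mulVec h₀ + bz) i) *
          Real.tanh ((Wh.mulVec y + Uh.mulVec (fun j =>
            sigmoid ((Wr.mulVec y + Ur.mulVec h₀ + br) j) * h₀ j) + bh) i))
      ((h₀ i) • ((0 : EuclideanSpace ℝ (Fin d) →L[ℝ] ℝ) -
          (sigmoid' ((Wz.mulVec x + Uz.mulVec h₀ + bz) i) •
            ((EuclideanSpace.proj (𝕜 := ℝ) i).comp (matCLM Wz)))) +
        (sigmoid ((Wz.mulVec x + Uz.mulVec h₀ + bz) i) •
            ((1 - Real.tanh ((Wh.mulVec x + Uh.mulVec (fun j =>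
              sigmoid ((Wr.mulVec x + Ur.mulVec h₀ + br) j) * h₀ j) + bh) i) ^ 2) •
              ((EuclideanSpace.proj (𝕜 := ℝ) i).comp (matCLM Wh) +
               ∑ j, (Uh i j * (h₀ j * sigmoid' ((Wr.mulVec x + Ur.mulVec h₀ + br) j))) •
                 ((EuclideanSpace.proj (𝕜 := ℝ) j).comp (matCLM Wr)))) +
          Real.tanh ((Wh.mulVec x + Uh.mulVec (fun j =>
              sigmoid ((Wr.mulVec x + Ur.mulVec h₀ + br) j) * h₀ j) + bh) i) •
            (sigmoid' ((Wz.mulVec x + Uz.mulVec h₀ + bz) i) •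
              ((EuclideanSpace.proj (𝕜 := ℝ) i).comp (matCLM Wz))))) x := by
  have hrowZ := hasFDerivAt_row Wz (Uz.mulVec h₀ + bz) i x
  have hrowZ' : HasFDerivAt (fun y : EuclideanSpace ℝ (Fin d) =>
      (Wz.mulVec y + Uz.mulVec h₀ + bz) i)
      ((EuclideanSpace.proj (𝕜 := ℝ) i).comp (matCLM Wz)) x := by
    have he : (fun y : EuclideanSpace ℝ (Fin d) => (Wz.mulVec y + Uz.mulVec h₀ + bz) i) =
        fun y : EuclideanSpace ℝ (Fin d) => (Wz.mulVec y + (Uz.mulVec h₀ + bz)) i := by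
      funext y; simp [add_assoc]
    rw [he]; exact hrowZ
  have hZ := (sigmoid_hasDerivAt _).comp_hasFDerivAt x hrowZ'
  -- sum term
  have hsum : HasFDerivAt (fun y : EuclideanSpace ℝ (Fin d) =>
      (Uh.mulVec (fun j => sigmoid ((Wr.mulVec y + Ur.mulVec h₀ + br) j) * h₀ j)) i)
      (∑ j, (Uh i j * (h₀ j * sigmoid' ((Wr.mulVec x + Ur.mulVec h₀ + br) j))) •
        ((EuclideanSpace.proj (𝕜 := ℝ) j).comp (matCLM Wr))) x := by
    have he : (fun y : EuclideanSpace ℝ (Fin d) =>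
        (Uh.mulVec (fun j => sigmoid ((Wr.mulVec y + Ur.mulVec h₀ + br) j) * h₀ j)) i) =
        fun y : EuclideanSpace ℝ (Fin d) => ∑ j, Uh i j * (sigmoid ((Wr.mulVec y + Ur.mulVec h₀ + br) j) * h₀ j) := by
      funext y; simp [Matrix.mulVec, dotProduct]
    rw [he]
    apply HasFDerivAt.fun_sum
    intro j _
    have hrowR : HasFDerivAt (fun y : EuclideanSpace ℝ (Fin d) =>
        (Wr.mulVec y + Ur.mulVec h₀ + br) j)
        ((EuclideanSpace.proj (𝕜 := ℝ) j).comp (matCLM Wr)) x := by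
      have he2 : (fun y : EuclideanSpace ℝ (Fin d) => (Wr.mulVec y + Ur.mulVec h₀ + br) j) =
          fun y : EuclideanSpace ℝ (Fin d) => (Wr.mulVec y + (Ur.mulVec h₀ + br)) j := by
        funext y; simp [add_assoc]
      rw [he2]; exact hasFDerivAt_row Wr (Ur.mulVec h₀ + br) j x
    have hRj := (sigmoid_hasDerivAt _).comp_hasFDerivAt x hrowR
    have := (hRj.mul_const (h₀ j)).const_mul (Uh i j)
    refine this.congr_fderiv ?_
    rw [smul_smul, smul_smul]
    congr 1
    unfold sigmoid'
    ring
  -- b function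
  have hB : HasFDerivAt (fun y : EuclideanSpace ℝ (Fin d) =>
      (Wh.mulVec y + Uh.mulVec (fun j =>
        sigmoid ((Wr.mulVec y + Ur.mulVec h₀ + br) j) * h₀ j) + bh) i)
      ((EuclideanSpace.proj (𝕜 := ℝ) i).comp (matCLM Wh) +
        ∑ j, (Uh i j * (h₀ j * sigmoid' ((Wr.mulVec x + Ur.mulVec h₀ + br) j))) •
          ((EuclideanSpace.proj (𝕜 := ℝ) j).comp (matCLM Wr))) x := by
    have he : (fun y : EuclideanSpace ℝ (Fin d) =>
        (Wh.mulVec y + Uh.mulVec (fun j =>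
          sigmoid ((Wr.mulVec y + Ur.mulVec h₀ + br) j) * h₀ j) + bh) i) =
        fun y => (((EuclideanSpace.proj (𝕜 := ℝ) i).comp (matCLM Wh)) y +
          (Uh.mulVec (fun j => sigmoid ((Wr.mulVec y + Ur.mulVec h₀ + br) j) * h₀ j)) i) +
            bh i := by
      funext y; simp [matCLM_apply]
    rw [he]
    exact ((((EuclideanSpace.proj (𝕜 := ℝ) i).comp (matCLM Wh)).hasFDerivAt).add hsum).add_const
      (bh i)
  have hH := (tanh_hasDerivAt _).comp_hasFDerivAt x hB
  have h1 := ((hasFDerivAt_const (1 : ℝ) x).sub hZ).mul_const (h₀ i)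
  have h2 := hZ.mul hH
  have := h1.add h2
  convert this using 2 <;> first | rfl | simp [sigmoid']
end main

section main2
variable {m d : ℕ} (Wz Wr Wh : Matrix (Fin m) (Fin d) ℝ)
  (Uz Ur Uh : Matrix (Fin m) (Fin m) ℝ) (bz br bh : Fin m → ℝ)
  (h₀ : EuclideanSpace ℝ (Fin m)) (x : EuclideanSpace ℝ (Fin d))

-- the big L
noncomputable def bigL : EuclideanSpace ℝ (Fin d) →L[ℝ] EuclideanSpace ℝ (Fin m) :=
  (diagCLM (fun i => (Real.tanh ((Wh.mulVec x + Uh.mulVec (fun j =>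
      sigmoid ((Wr.mulVec x + Ur.mulVec h₀ + br) j) * h₀ j) + bh) i) - h₀ i) *
      sigmoid' ((Wz.mulVec x + Uz.mulVec h₀ + bz) i))).comp (matCLM Wz) +
  (diagCLM (fun i => sigmoid ((Wz.mulVec x + Uz.mulVec h₀ + bz) i) *
      (1 - Real.tanh ((Wh.mulVec x + Uh.mulVec (fun j =>
        sigmoid ((Wr.mulVec x + Ur.mulVec h₀ + br) j) * h₀ j) + bh) i) ^ 2))).comp
    (matCLM Wh + (matCLM Uh).comp ((diagCLM (fun j => h₀ j *
      sigmoid' ((Wr.mulVec x + Ur.mulVec h₀ + br) j))).comp (matCLM Wr)))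

lemma bigL_eq (i : Fin m) :
    (PiLp.proj 2 (fun _ : Fin m => ℝ) i).comp (bigL Wz Wr Wh Uz Ur Uh bz br bh h₀ x) =
    ((h₀ i) • ((0 : EuclideanSpace ℝ (Fin d) →L[ℝ] ℝ) -
          (sigmoid' ((Wz.mulVec x + Uz.mulVec h₀ + bz) i) •
            ((EuclideanSpace.proj (𝕜 := ℝ) i).comp (matCLM Wz)))) +
        (sigmoid ((Wz.mulVec x + Uz.mulVec h₀ + bz) i) •
            ((1 - Real.tanh ((Wh.mulVec x + Uh.mulVec (fun j =>
              sigmoid ((Wr.mulVec x + Ur.mulVec h₀ + br) j) * h₀ j) + bh) i) ^ 2) •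
              ((EuclideanSpace.proj (𝕜 := ℝ) i).comp (matCLM Wh) +
               ∑ j, (Uh i j * (h₀ j * sigmoid' ((Wr.mulVec x + Ur.mulVec h₀ + br) j))) •
                 ((EuclideanSpace.proj (𝕜 := ℝ) j).comp (matCLM Wr)))) +
          Real.tanh ((Wh.mulVec x + Uh.mulVec (fun j =>
              sigmoid ((Wr.mulVec x + Ur.mulVec h₀ + br) j) * h₀ j) + bh) i) •
            (sigmoid' ((Wz.mulVec x + Uz.mulVec h₀ + bz) i) •
              ((EuclideanSpace.proj (𝕜 := ℝ) i).comp (matCLM Wz))))) := by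
  ext v
  simp only [ContinuousLinearMap.comp_apply, ContinuousLinearMap.add_apply,
    ContinuousLinearMap.smul_apply, ContinuousLinearMap.sub_apply,
    ContinuousLinearMap.zero_apply, ContinuousLinearMap.sum_apply, bigL,
    PiLp.proj_apply, EuclideanSpace.proj, smul_eq_mul, PiLp.add_apply,
    diagCLM_apply, matCLM_apply]
  have hUh : (Uh *ᵥ (diagCLM fun j => h₀ j * sigmoid' ((Wr *ᵥ x + Ur *ᵥ h₀ + br) j))
        ((matCLM Wr) v)) i
      = ∑ j, Uh i j * (h₀ j * sigmoid' ((Wr *ᵥ x + Ur *ᵥ h₀ + br) j)) * (Wr *ᵥ v) j := by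
    simp only [Matrix.mulVec, dotProduct, diagCLM_apply]
    refine Finset.sum_congr rfl fun j _ => ?_
    have : (matCLM Wr) v j = (Wr *ᵥ v) j := matCLM_apply Wr v j
    rw [this]
    simp only [Matrix.mulVec, dotProduct]
    ring
  rw [hUh]
  ring
end main2

section main3
variable {m d : ℕ} (Wz Wr Wh : Matrix (Fin m) (Fin d) ℝ)
  (Uz Ur Uh : Matrix (Fin m) (Fin m) ℝ) (bz br bh : Fin m → ℝ)
  (h₀ : EuclideanSpace ℝ (Fin m)) (x : EuclideanSpace ℝ (Fin d))

lemma partial_hasFDerivAt :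
    HasFDerivAt (fun y => gruF Wz Wr Wh Uz Ur Uh bz br bh (h₀, y))
      (bigL Wz Wr Wh Uz Ur Uh bz br bh h₀ x) x := by
  rw [← hasFDerivWithinAt_univ, hasFDerivWithinAt_euclidean]
  intro i
  rw [hasFDerivWithinAt_univ]
  rw [bigL_eq]
  have h1 := coord_hasFDerivAt Wz Wr Wh Uz Ur Uh bz br bh h₀ x i
  have he : (fun y => gruF Wz Wr Wh Uz Ur Uh bz br bh (h₀, y) i) =
      (fun y : EuclideanSpace ℝ (Fin d) =>
      (1 - sigmoid ((Wz.mulVec y + Uz.mulVec h₀ + bz) i)) * h₀ i +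
        sigmoid ((Wz.mulVec y + Uz.mulVec h₀ + bz) i) *
          Real.tanh ((Wh.mulVec y + Uh.mulVec (fun j =>
            sigmoid ((Wr.mulVec y + Ur.mulVec h₀ + br) j) * h₀ j) + bh) i)) := by
    funext y
    simp [gruF, gruZ, gruR, gruHTilde]
  rw [he]
  exact h1
end main3

section main4
variable {m d : ℕ} (Wz Wr Wh : Matrix (Fin m) (Fin d) ℝ)
  (Uz Ur Uh : Matrix (Fin m) (Fin m) ℝ) (bz br bh : Fin m → ℝ)

lemma gruF_differentiable :
    Differentiable ℝ (gruF Wz Wr Wh Uz Ur Uh bz br bh) := by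
  rw [differentiable_euclidean]
  intro i
  have hx : ∀ (A : Matrix (Fin m) (Fin d) ℝ) (k : Fin m), Differentiable ℝ
      (fun p : EuclideanSpace ℝ (Fin m) × EuclideanSpace ℝ (Fin d) => (A.mulVec p.2) k) := by
    intro A k
    have := ((EuclideanSpace.proj (𝕜 := ℝ) k).comp ((matCLM A).comp
      (ContinuousLinearMap.snd ℝ (EuclideanSpace ℝ (Fin m)) (EuclideanSpace ℝ (Fin d))))).differentiable
    have he : (fun p : EuclideanSpace ℝ (Fin m) × EuclideanSpace ℝ (Fin d) => (A.mulVec p.2) k) =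
        fun p => ((EuclideanSpace.proj (𝕜 := ℝ) k).comp ((matCLM A).comp
          (ContinuousLinearMap.snd ℝ (EuclideanSpace ℝ (Fin m)) (EuclideanSpace ℝ (Fin d))))) p := by
      funext p; simp [matCLM_apply]
    rw [he]; exact this
  have hh : ∀ (B : Matrix (Fin m) (Fin m) ℝ) (k : Fin m), Differentiable ℝ
      (fun p : EuclideanSpace ℝ (Fin m) × EuclideanSpace ℝ (Fin d) => (B.mulVec p.1) k) := by
    intro B k
    have := ((EuclideanSpace.proj (𝕜 := ℝ) k).comp ((matCLM B).comp
      (ContinuousLinearMap.fst ℝ (EuclideanSpace ℝ (Fin m)) (EuclideanSpace ℝ (Fin d))))).differentiable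
    have he : (fun p : EuclideanSpace ℝ (Fin m) × EuclideanSpace ℝ (Fin d) => (B.mulVec p.1) k) =
        fun p => ((EuclideanSpace.proj (𝕜 := ℝ) k).comp ((matCLM B).comp
          (ContinuousLinearMap.fst ℝ (EuclideanSpace ℝ (Fin m)) (EuclideanSpace ℝ (Fin d))))) p := by
      funext p; simp [matCLM_apply]
    rw [he]; exact this
  have hco : ∀ (k : Fin m), Differentiable ℝ
      (fun p : EuclideanSpace ℝ (Fin m) × EuclideanSpace ℝ (Fin d) => (p.1 : Fin m → ℝ) k) := by
    intro k
    exact ((EuclideanSpace.proj (𝕜 := ℝ) k).comp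
      (ContinuousLinearMap.fst ℝ (EuclideanSpace ℝ (Fin m)) (EuclideanSpace ℝ (Fin d)))).differentiable
  have hZ : Differentiable ℝ (fun p : EuclideanSpace ℝ (Fin m) × EuclideanSpace ℝ (Fin d) =>
      sigmoid ((Wz.mulVec p.2 + Uz.mulVec p.1 + bz) i)) := by
    apply sigmoid_differentiable.comp
    have he : (fun p : EuclideanSpace ℝ (Fin m) × EuclideanSpace ℝ (Fin d) =>
        (Wz.mulVec p.2 + Uz.mulVec p.1 + bz) i) =
        fun p => ((Wz.mulVec p.2) i + (Uz.mulVec p.1) i) + bz i := by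
      funext p; simp
    rw [he]
    exact ((hx Wz i).add (hh Uz i)).add_const (bz i)
  have hrrow : ∀ j : Fin m, Differentiable ℝ
      (fun p : EuclideanSpace ℝ (Fin m) × EuclideanSpace ℝ (Fin d) =>
        (Wr.mulVec p.2 + Ur.mulVec p.1 + br) j) := by
    intro j
    have he : (fun p : EuclideanSpace ℝ (Fin m) × EuclideanSpace ℝ (Fin d) =>
        (Wr.mulVec p.2 + Ur.mulVec p.1 + br) j) =
        fun p => ((Wr.mulVec p.2) j + (Ur.mulVec p.1) j) + br j := by
      funext p; simp
    rw [he]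
    exact ((hx Wr j).add (hh Ur j)).add_const (br j)
  have hsum : Differentiable ℝ (fun p : EuclideanSpace ℝ (Fin m) × EuclideanSpace ℝ (Fin d) =>
      (Uh.mulVec (fun j => sigmoid ((Wr.mulVec p.2 + Ur.mulVec p.1 + br) j) * p.1 j)) i) := by
    have he : (fun p : EuclideanSpace ℝ (Fin m) × EuclideanSpace ℝ (Fin d) =>
        (Uh.mulVec (fun j => sigmoid ((Wr.mulVec p.2 + Ur.mulVec p.1 + br) j) * p.1 j)) i) =
        fun p => ∑ j, Uh i j * (sigmoid ((Wr.mulVec p.2 + Ur.mulVec p.1 + br) j) * p.1 j) := by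
      funext p; simp [Matrix.mulVec, dotProduct]
    rw [he]
    apply Differentiable.fun_sum
    intro j _
    exact (( (sigmoid_differentiable.comp (hrrow j)).mul (hco j)).const_mul (Uh i j))
  have hHT : Differentiable ℝ (fun p : EuclideanSpace ℝ (Fin m) × EuclideanSpace ℝ (Fin d) =>
      Real.tanh ((Wh.mulVec p.2 + Uh.mulVec (fun j =>
        sigmoid ((Wr.mulVec p.2 + Ur.mulVec p.1 + br) j) * p.1 j) + bh) i)) := by
    apply tanh_differentiable.comp
    have he : (fun p : EuclideanSpace ℝ (Fin m) × EuclideanSpace ℝ (Fin d) =>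
        (Wh.mulVec p.2 + Uh.mulVec (fun j =>
          sigmoid ((Wr.mulVec p.2 + Ur.mulVec p.1 + br) j) * p.1 j) + bh) i) =
        fun p => ((Wh.mulVec p.2) i + (Uh.mulVec (fun j =>
          sigmoid ((Wr.mulVec p.2 + Ur.mulVec p.1 + br) j) * p.1 j)) i) + bh i := by
      funext p; simp
    rw [he]
    exact ((hx Wh i).add hsum).add_const (bh i)
  have he : (fun p : EuclideanSpace ℝ (Fin m) × EuclideanSpace ℝ (Fin d) =>
      gruF Wz Wr Wh Uz Ur Uh bz br bh p i) =
      fun p => (1 - sigmoid ((Wz.mulVec p.2 + Uz.mulVec p.1 + bz) i)) * (p.1 : Fin m → ℝ) i +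
        sigmoid ((Wz.mulVec p.2 + Uz.mulVec p.1 + bz) i) *
          Real.tanh ((Wh.mulVec p.2 + Uh.mulVec (fun j =>
            sigmoid ((Wr.mulVec p.2 + Ur.mulVec p.1 + br) j) * p.1 j) + bh) i) := by
    funext p; simp [gruF, gruZ, gruR, gruHTilde]
  rw [he]
  exact (((differentiable_const (1:ℝ)).sub hZ).mul (hco i)).add (hZ.mul hHT)

lemma fderiv_comp_inr_eq (p : EuclideanSpace ℝ (Fin m) × EuclideanSpace ℝ (Fin d)) :
    (fderiv ℝ (gruF Wz Wr Wh Uz Ur Uh bz br bh) p).comp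
        (ContinuousLinearMap.inr ℝ (EuclideanSpace ℝ (Fin m)) (EuclideanSpace ℝ (Fin d))) =
      bigL Wz Wr Wh Uz Ur Uh bz br bh p.1 p.2 := by
  have h1 : HasFDerivAt (fun y : EuclideanSpace ℝ (Fin d) => (p.1, y))
      (ContinuousLinearMap.inr ℝ (EuclideanSpace ℝ (Fin m)) (EuclideanSpace ℝ (Fin d))) p.2 :=
    hasFDerivAt_prodMk_right p.1 p.2
  have h2 := ((gruF_differentiable Wz Wr Wh Uz Ur Uh bz br bh) p).hasFDerivAt.comp p.2 h1
  have h3 := partial_hasFDerivAt Wz Wr Wh Uz Ur Uh bz br bh p.1 p.2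
  exact (h2.unique h3)
end main4

section main5
variable {m d : ℕ} (Wz Wr Wh : Matrix (Fin m) (Fin d) ℝ)
  (Uz Ur Uh : Matrix (Fin m) (Fin m) ℝ) (bz br bh : Fin m → ℝ)

lemma bigL_norm_le (h₀ : EuclideanSpace ℝ (Fin m)) (x : EuclideanSpace ℝ (Fin d))
    (zmax : ℝ) (hzmax0 : 0 ≤ zmax)
    (hh : ∀ i, |(h₀ : Fin m → ℝ) i| ≤ 1)
    (hz : ∀ i, sigmoid ((Wz.mulVec x + Uz.mulVec h₀ + bz) i) ≤ zmax) :
    ‖bigL Wz Wr Wh Uz Ur Uh bz br bh h₀ x‖ ≤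
      (1/2) * ‖matCLM Wz‖ + zmax * (‖matCLM Wh‖ + (1/4) * ‖matCLM Uh‖ * ‖matCLM Wr‖) := by
  have hA : ‖diagCLM (fun i => (Real.tanh ((Wh.mulVec x + Uh.mulVec (fun j =>
      sigmoid ((Wr.mulVec x + Ur.mulVec h₀ + br) j) * h₀ j) + bh) i) - h₀ i) *
      sigmoid' ((Wz.mulVec x + Uz.mulVec h₀ + bz) i))‖ ≤ 1/2 := by
    apply diagCLM_norm_le _ _ (by norm_num)
    intro i
    rw [abs_mul]
    have h1 : |Real.tanh ((Wh.mulVec x + Uh.mulVec (fun j =>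
        sigmoid ((Wr.mulVec x + Ur.mulVec h₀ + br) j) * h₀ j) + bh) i) - h₀ i| ≤ 2 := by
      calc _ ≤ |Real.tanh _| + |h₀ i| := abs_sub _ _
        _ ≤ 1 + 1 := add_le_add (abs_tanh_le_one _) (hh i)
        _ = 2 := by norm_num
    have h2 : |sigmoid' ((Wz.mulVec x + Uz.mulVec h₀ + bz) i)| ≤ 1/4 := by
      rw [abs_of_nonneg (sigmoid_deriv_nonneg _)]
      exact sigmoid_deriv_bound _
    calc _ ≤ 2 * (1/4 : ℝ) :=
          mul_le_mul h1 h2 (abs_nonneg _) (by norm_num)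
      _ = 1/2 := by norm_num
  have hB : ‖diagCLM (fun i => sigmoid ((Wz.mulVec x + Uz.mulVec h₀ + bz) i) *
      (1 - Real.tanh ((Wh.mulVec x + Uh.mulVec (fun j =>
        sigmoid ((Wr.mulVec x + Ur.mulVec h₀ + br) j) * h₀ j) + bh) i) ^ 2))‖ ≤ zmax := by
    apply diagCLM_norm_le _ _ hzmax0
    intro i
    have ht2 : Real.tanh ((Wh.mulVec x + Uh.mulVec (fun j =>
        sigmoid ((Wr.mulVec x + Ur.mulVec h₀ + br) j) * h₀ j) + bh) i) ^ 2 ≤ 1 := by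
      have := abs_tanh_le_one ((Wh.mulVec x + Uh.mulVec (fun j =>
        sigmoid ((Wr.mulVec x + Ur.mulVec h₀ + br) j) * h₀ j) + bh) i)
      nlinarith [abs_nonneg (Real.tanh ((Wh.mulVec x + Uh.mulVec (fun j =>
        sigmoid ((Wr.mulVec x + Ur.mulVec h₀ + br) j) * h₀ j) + bh) i)),
        sq_abs (Real.tanh ((Wh.mulVec x + Uh.mulVec (fun j =>
        sigmoid ((Wr.mulVec x + Ur.mulVec h₀ + br) j) * h₀ j) + bh) i))]
    have hzp := sigmoid_pos ((Wz.mulVec x + Uz.mulVec h₀ + bz) i)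
    have hzi := hz i
    rw [abs_of_nonneg (by nlinarith)]
    nlinarith
  have hC : ‖diagCLM (fun j => h₀ j *
      sigmoid' ((Wr.mulVec x + Ur.mulVec h₀ + br) j))‖ ≤ 1/4 := by
    apply diagCLM_norm_le _ _ (by norm_num)
    intro j
    rw [abs_mul]
    calc _ ≤ 1 * (1/4 : ℝ) := by
          apply mul_le_mul (hh j) _ (abs_nonneg _) zero_le_one
          rw [abs_of_nonneg (sigmoid_deriv_nonneg _)]
          exact sigmoid_deriv_bound _
      _ = 1/4 := by norm_num
  unfold bigL
  calc ‖_ + _‖ ≤ _ + _ := norm_add_le _ _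
    _ ≤ (1/2) * ‖matCLM Wz‖ + zmax * (‖matCLM Wh‖ + (1/4) * ‖matCLM Uh‖ * ‖matCLM Wr‖) := by
        gcongr ?_ + ?_
        · calc _ ≤ ‖diagCLM _‖ * ‖matCLM Wz‖ := ContinuousLinearMap.opNorm_comp_le _ _
            _ ≤ (1/2) * ‖matCLM Wz‖ := mul_le_mul_of_nonneg_right hA (norm_nonneg _)
        · calc _ ≤ ‖diagCLM _‖ * ‖matCLM Wh + (matCLM Uh).comp ((diagCLM _).comp (matCLM Wr))‖ :=
                ContinuousLinearMap.opNorm_comp_le _ _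
            _ ≤ zmax * (‖matCLM Wh‖ + (1/4) * ‖matCLM Uh‖ * ‖matCLM Wr‖) := by
                apply mul_le_mul hB _ (norm_nonneg _) hzmax0
                calc _ ≤ ‖matCLM Wh‖ + ‖(matCLM Uh).comp ((diagCLM _).comp (matCLM Wr))‖ :=
                      norm_add_le _ _
                  _ ≤ ‖matCLM Wh‖ + (1/4) * ‖matCLM Uh‖ * ‖matCLM Wr‖ := by
                      gcongr ‖matCLM Wh‖ + ?_
                      calc _ ≤ ‖matCLM Uh‖ * ‖(diagCLM _).comp (matCLM Wr)‖ :=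
                            ContinuousLinearMap.opNorm_comp_le _ _
                        _ ≤ ‖matCLM Uh‖ * (‖diagCLM _‖ * ‖matCLM Wr‖) :=
                            mul_le_mul_of_nonneg_left
                              (ContinuousLinearMap.opNorm_comp_le _ _) (norm_nonneg _)
                        _ ≤ ‖matCLM Uh‖ * ((1/4) * ‖matCLM Wr‖) :=
                            mul_le_mul_of_nonneg_left
                              (mul_le_mul_of_nonneg_right hC (norm_nonneg _)) (norm_nonneg _)
                        _ = (1/4) * ‖matCLM Uh‖ * ‖matCLM Wr‖ := by ring
end main5

/-- spectral-norm bound on the GRU Jacobian with respect to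
the input. -/
theorem gru_jacobian_x_bound {m d : ℕ}
    (Wz Wr Wh : Matrix (Fin m) (Fin d) ℝ)
    (Uz Ur Uh : Matrix (Fin m) (Fin m) ℝ) (bz br bh : Fin m → ℝ)
    (T : Set (EuclideanSpace ℝ (Fin m) × EuclideanSpace ℝ (Fin d)))
    (zmin zmax rmax : ℝ) (hzmin : 0 < zmin) (hzmax : zmax < 1)
    (hzz : zmin ≤ zmax) (hrmax : 0 ≤ rmax)
    (hhbound : ∀ p ∈ T, ∀ i, |(p.1 : Fin m → ℝ) i| ≤ 1)
    (hzrange : ∀ p ∈ T, ∀ i,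
      zmin ≤ gruZ Wz Uz bz (p.1 : Fin m → ℝ) (p.2 : Fin d → ℝ) i ∧
        gruZ Wz Uz bz (p.1 : Fin m → ℝ) (p.2 : Fin d → ℝ) i ≤ zmax)
    (hrrange : ∀ p ∈ T, ∀ i,
      gruR Wr Ur br (p.1 : Fin m → ℝ) (p.2 : Fin d → ℝ) i ≤ rmax) :
    ∀ p ∈ T,
      ‖(fderiv ℝ (gruF Wz Wr Wh Uz Ur Uh bz br bh) p).comp
        (ContinuousLinearMap.inr ℝ (EuclideanSpace ℝ (Fin m))
          (EuclideanSpace ℝ (Fin d)))‖ ≤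
        (1 / 2) * specNorm Wz +
          zmax * (specNorm Wh + (1 / 4) * specNorm Uh * specNorm Wr) := by
  intro p hp
  rw [fderiv_comp_inr_eq]
  have hzmax0 : (0:ℝ) ≤ zmax := le_trans hzmin.le hzz
  have hz : ∀ i, sigmoid ((Wz.mulVec (p.2 : Fin d → ℝ) +
      Uz.mulVec (p.1 : Fin m → ℝ) + bz) i) ≤ zmax := fun i => (hzrange p hp i).2
  have hb := bigL_norm_le Wz Wr Wh Uz Ur Uh bz br bh p.1 p.2 zmax hzmax0 (hhbound p hp) hz
  simp only [specNorm_eq] at hb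
  exact hb
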